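/- Let θ₁, θ₂ be inner functions with K_{θ₁} = h₊K_{θ₂} for some h₊ invertible in H_∞^+. Then φ₊ is a maximal function for K_{θ₁} (i.e., K_min(φ₊) = K_{θ₁}) if and only if φ₊ = h₊ψ₊ where ψ₊ is a maximal function for K_{θ₂}. -/

import Mathlib

open MeasureTheory Complex Filter Set
open scoped Pointwise ENNReal

noncomputable section

/-- The open upper half-plane. -/
def UHP : Set ℂ := {z | 0 < z.im}
/-- The open lower half-plane. -/
def LHP : Set ℂ := {z | z.im < 0}

/-- Nontangential-type boundary limit from above at a real point `x`. -/
def bdryLimUp (F : ℂ → ℂ) (x : ℝ) (c : ℂ) : Prop :=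
  Filter.Tendsto (fun y : ℝ => F (x + y * Complex.I)) (nhdsWithin 0 (Set.Ioi 0)) (nhds c)

/-- Boundary limit from below at a real point `x`. -/
def bdryLimLow (F : ℂ → ℂ) (x : ℝ) (c : ℂ) : Prop :=
  Filter.Tendsto (fun y : ℝ => F (x + y * Complex.I)) (nhdsWithin 0 (Set.Iio 0)) (nhds c)

/-- The Hardy space `H_p^+` of the upper half-plane, viewed as a set of boundary
functions on `ℝ`. -/
def Hplus (p : ℝ) : Set (ℝ → ℂ) :=
  {f | MemLp f (ENNReal.ofReal p) volume ∧
    ∃ F : ℂ → ℂ, DifferentiableOn ℂ F UHP ∧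
      (∃ C : ℝ, ∀ y : ℝ, 0 < y → (∫ x : ℝ, ‖F (x + y * Complex.I)‖ ^ p) ≤ C) ∧
      ∀ᵐ x : ℝ, bdryLimUp F x (f x)}

/-- The Hardy space `H_p^-` of the lower half-plane, as boundary functions on `ℝ`. -/
def Hminus (p : ℝ) : Set (ℝ → ℂ) :=
  {f | MemLp f (ENNReal.ofReal p) volume ∧
    ∃ F : ℂ → ℂ, DifferentiableOn ℂ F LHP ∧
      (∃ C : ℝ, ∀ y : ℝ, y < 0 → (∫ x : ℝ, ‖F (x + y * Complex.I)‖ ^ p) ≤ C) ∧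
      ∀ᵐ x : ℝ, bdryLimLow F x (f x)}

/-- `H_∞^+`: boundary functions of bounded analytic functions on `ℂ⁺`. -/
def HinfPlus : Set (ℝ → ℂ) :=
  {f | ∃ F : ℂ → ℂ, DifferentiableOn ℂ F UHP ∧ (∃ C : ℝ, ∀ z ∈ UHP, ‖F z‖ ≤ C) ∧
      ∀ᵐ x : ℝ, bdryLimUp F x (f x)}

/-- `H_∞^-`: boundary functions of bounded analytic functions on `ℂ⁻`. -/
def HinfMinus : Set (ℝ → ℂ) :=
  {f | ∃ F : ℂ → ℂ, DifferentiableOn ℂ F LHP ∧ (∃ C : ℝ, ∀ z ∈ LHP, ‖F z‖ ≤ C) ∧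
      ∀ᵐ x : ℝ, bdryLimLow F x (f x)}

/-- Invertible elements of `H_∞^+`. -/
def GHinfPlus (h : ℝ → ℂ) : Prop :=
  h ∈ HinfPlus ∧ ∃ k ∈ HinfPlus, ∀ᵐ x : ℝ, h x * k x = 1

/-- Invertible elements of `H_∞^-`. -/
def GHinfMinus (h : ℝ → ℂ) : Prop :=
  h ∈ HinfMinus ∧ ∃ k ∈ HinfMinus, ∀ᵐ x : ℝ, h x * k x = 1

/-- Inner function on the upper half-plane: analytic and bounded by `1` on `ℂ⁺`, with
unimodular boundary values a.e. on `ℝ` (its values on `ℝ` serve as the boundary trace). -/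
def InnerUHP (θ : ℂ → ℂ) : Prop :=
  DifferentiableOn ℂ θ UHP ∧ (∀ z ∈ UHP, ‖θ z‖ ≤ 1) ∧
  (∀ᵐ x : ℝ, ‖θ (x : ℂ)‖ = 1) ∧ (∀ᵐ x : ℝ, bdryLimUp θ x (θ (x : ℂ)))

/-- Inner function on the lower half-plane. -/
def InnerLHP (θ : ℂ → ℂ) : Prop :=
  DifferentiableOn ℂ θ LHP ∧ (∀ z ∈ LHP, ‖θ z‖ ≤ 1) ∧
  (∀ᵐ x : ℝ, ‖θ (x : ℂ)‖ = 1) ∧ (∀ᵐ x : ℝ, bdryLimLow θ x (θ (x : ℂ)))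

/-- Non-constancy (on the upper half-plane). -/
def Nonconst (θ : ℂ → ℂ) : Prop := ¬ ∃ c : ℂ, ∀ z ∈ UHP, θ z = c

/-- Non-constancy on the lower half-plane. -/
def NonconstLHP (θ : ℂ → ℂ) : Prop := ¬ ∃ c : ℂ, ∀ z ∈ LHP, θ z = c

/-- The (generalised) Toeplitz kernel of a symbol `g` in `H_p^+`:
`ker T_g = {f ∈ H_p^+ : g f ∈ H_p^-}`. -/
def kerT (p : ℝ) (g : ℝ → ℂ) : Set (ℝ → ℂ) :=
  {f | f ∈ Hplus p ∧ (fun x => g x * f x) ∈ Hminus p}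

/-- Boundary trace of a function on the closed upper half-plane. -/
def bd (θ : ℂ → ℂ) : ℝ → ℂ := fun x => θ (x : ℂ)

/-- The model space `K_θ^p = H_p^+ ∩ θ H_p^- = ker T_{θ̄}`. -/
def Kmodel (p : ℝ) (θ : ℂ → ℂ) : Set (ℝ → ℂ) :=
  kerT p (fun x => (starRingEnd ℂ) (θ (x : ℂ)))

/-- Pointwise multiplication of a set of boundary functions by a fixed function. -/
def mulSet (h : ℝ → ℂ) (K : Set (ℝ → ℂ)) : Set (ℝ → ℂ) :=
  (fun f => fun x => h x * f x) '' K

/-- `g ∈ L_∞(ℝ)`. -/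
def IsLinf (g : ℝ → ℂ) : Prop :=
  AEStronglyMeasurable g volume ∧ ∃ C : ℝ, ∀ᵐ x : ℝ, ‖g x‖ ≤ C

/-- `K = A ⊕ B`: `K` is the (a.e.) direct sum of `A` and `B`. -/
def DirectSumEq (K A B : Set (ℝ → ℂ)) : Prop :=
  K = A + B ∧ ∀ f ∈ A, f ∈ B → f =ᵐ[volume] (0 : ℝ → ℂ)

/-- `θ₂ ⪯ θ₁` : `θ₂` divides `θ₁` in the sense that `θ₁ = θ₂ θ₃` with `θ₃` inner. -/
def Divides (θ₂ θ₁ : ℂ → ℂ) : Prop :=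
  ∃ θ₃ : ℂ → ℂ, InnerUHP θ₃ ∧ ∀ z ∈ UHP, θ₁ z = θ₂ z * θ₃ z

/-- `θ₂ ≺ θ₁` : `θ₁ = θ₂ θ₃` with `θ₃` a non-constant inner function. -/
def DividesStrict (θ₂ θ₁ : ℂ → ℂ) : Prop :=
  ∃ θ₃ : ℂ → ℂ, InnerUHP θ₃ ∧ Nonconst θ₃ ∧ ∀ z ∈ UHP, θ₁ z = θ₂ z * θ₃ z

/-- `K` is the minimal Toeplitz kernel of `φ`: it is a Toeplitz kernel (with `L_∞`
symbol) containing `φ` and contained in every Toeplitz kernel containing `φ`. -/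
def IsMinKernel (p : ℝ) (φ : ℝ → ℂ) (K : Set (ℝ → ℂ)) : Prop :=
  (∃ g : ℝ → ℂ, IsLinf g ∧ K = kerT p g) ∧ φ ∈ K ∧
  ∀ g : ℝ → ℂ, IsLinf g → φ ∈ kerT p g → K ⊆ kerT p g

/-- Outer function in `H_p^+`: a nonzero element with no non-constant inner factor. -/
def IsOuterPlusLp (p : ℝ) (f : ℝ → ℂ) : Prop :=
  f ∈ Hplus p ∧ ¬ f =ᵐ[volume] (0 : ℝ → ℂ) ∧
  ∀ θ : ℂ → ℂ, InnerUHP θ → (∃ g ∈ Hplus p, ∀ᵐ x : ℝ, f x = θ (x : ℂ) * g x) → ¬ Nonconst θ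

/-- Outer function in `H_p^-`. -/
def IsOuterMinusLp (p : ℝ) (f : ℝ → ℂ) : Prop :=
  f ∈ Hminus p ∧ ¬ f =ᵐ[volume] (0 : ℝ → ℂ) ∧
  ∀ θ : ℂ → ℂ, InnerLHP θ → (∃ g ∈ Hminus p, ∀ᵐ x : ℝ, f x = θ (x : ℂ) * g x) → ¬ NonconstLHP θ

/-- Outer function in `H_∞^+`. -/
def IsOuterPlusInf (f : ℝ → ℂ) : Prop :=
  f ∈ HinfPlus ∧ ¬ f =ᵐ[volume] (0 : ℝ → ℂ) ∧
  ∀ θ : ℂ → ℂ, InnerUHP θ → (∃ g ∈ HinfPlus, ∀ᵐ x : ℝ, f x = θ (x : ℂ) * g x) → ¬ Nonconst θ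

/-- Outer function in `H_∞^-`. -/
def IsOuterMinusInf (f : ℝ → ℂ) : Prop :=
  f ∈ HinfMinus ∧ ¬ f =ᵐ[volume] (0 : ℝ → ℂ) ∧
  ∀ θ : ℂ → ℂ, InnerLHP θ → (∃ g ∈ HinfMinus, ∀ᵐ x : ℝ, f x = θ (x : ℂ) * g x) → ¬ NonconstLHP θ

end

/-!
Multiplication by `h` maps `K_{θ₂}` onto `K_{θ₁}`, and for `f ∈ H_p^+` with `h f ∈ H_p^+` one has
`h f ∈ ker T_g ↔ f ∈ ker T_{g h}`. Since `h` and `h⁻¹` are bounded, `g ↦ g h` is a bijection of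
`L_∞` symbols (up to a.e. equality), so the Toeplitz kernels containing `h ψ` correspond to those
containing `ψ`, and `K_{θ₁}` is the smallest of the former iff `K_{θ₂}` is the smallest of the latter.
-/

open Topology

lemma tendsto_one_div_add_one_nhdsWithin_Ioi :
    Tendsto (fun n : ℕ => (1 / (n + 1) : ℝ)) atTop (𝓝[>] 0) := by
  rw [tendsto_nhdsWithin_iff]
  refine ⟨tendsto_one_div_add_atTop_nhds_zero_nat, Eventually.of_forall fun n => ?_⟩
  simp only [Set.mem_Ioi]
  positivity

lemma ofReal_add_ofReal_mul_I_mem_UHP (x : ℝ) {y : ℝ} (hy : 0 < y) :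
    (x : ℂ) + (y : ℂ) * I ∈ UHP := by
  simpa [UHP] using hy

lemma aestronglyMeasurable_of_bdryLimUp {F : ℂ → ℂ} {f : ℝ → ℂ}
    (hF : DifferentiableOn ℂ F UHP) (hlim : ∀ᵐ x : ℝ, bdryLimUp F x (f x)) :
    AEStronglyMeasurable f volume := by
  have hslice : ∀ n : ℕ, Continuous fun x : ℝ => F (x + ((1 / (n + 1) : ℝ) : ℂ) * I) :=
    fun n => hF.continuousOn.comp_continuous (by fun_prop)
      fun x => ofReal_add_ofReal_mul_I_mem_UHP x (by positivity)
  refine aestronglyMeasurable_of_tendsto_ae atTop (fun n => (hslice n).aestronglyMeasurable) ?_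
  filter_upwards [hlim] with x hx
  exact hx.comp tendsto_one_div_add_one_nhdsWithin_Ioi

lemma ae_norm_le_of_bdryLimUp {F : ℂ → ℂ} {f : ℝ → ℂ} {C : ℝ} (hb : ∀ z ∈ UHP, ‖F z‖ ≤ C)
    (hlim : ∀ᵐ x : ℝ, bdryLimUp F x (f x)) : ∀ᵐ x : ℝ, ‖f x‖ ≤ C := by
  filter_upwards [hlim] with x hx
  refine le_of_tendsto (hx.comp tendsto_one_div_add_one_nhdsWithin_Ioi).norm
    (Eventually.of_forall fun n => hb _ ?_)
  exact ofReal_add_ofReal_mul_I_mem_UHP x (by positivity)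

lemma isLinf_of_mem_HinfPlus {h : ℝ → ℂ} (hh : h ∈ HinfPlus) : IsLinf h := by
  obtain ⟨F, hF, ⟨C, hC⟩, hlim⟩ := hh
  exact ⟨aestronglyMeasurable_of_bdryLimUp hF hlim, C, ae_norm_le_of_bdryLimUp hC hlim⟩

lemma InnerUHP.isLinf_conj {θ : ℂ → ℂ} (hθ : InnerUHP θ) :
    IsLinf fun x : ℝ => (starRingEnd ℂ) (θ x) := by
  obtain ⟨hd, -, hnorm, hlim⟩ := hθ
  refine ⟨continuous_conj.comp_aestronglyMeasurable
    (aestronglyMeasurable_of_bdryLimUp hd hlim), 1, ?_⟩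
  filter_upwards [hnorm] with x hx
  simp [hx]

lemma IsLinf.mul {g k : ℝ → ℂ} (hg : IsLinf g) (hk : IsLinf k) :
    IsLinf fun x => g x * k x := by
  obtain ⟨hgm, Cg, hCg⟩ := hg
  obtain ⟨hkm, Ck, hCk⟩ := hk
  have hCg0 : 0 ≤ Cg := (norm_nonneg _).trans hCg.exists.choose_spec
  refine ⟨hgm.mul hkm, Cg * Ck, ?_⟩
  filter_upwards [hCg, hCk] with x hgx hkx
  rw [norm_mul]
  exact mul_le_mul hgx hkx (norm_nonneg _) hCg0

section ToeplitzKernel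

variable {p : ℝ}

lemma mem_Hplus_of_ae_eq {f f' : ℝ → ℂ} (hf : f ∈ Hplus p) (he : f =ᵐ[volume] f') :
    f' ∈ Hplus p := by
  obtain ⟨hm, F, hF, hC, hlim⟩ := hf
  refine ⟨hm.ae_eq he, F, hF, hC, ?_⟩
  filter_upwards [hlim, he] with x hx hex
  rwa [← hex]

lemma mem_Hminus_of_ae_eq {f f' : ℝ → ℂ} (hf : f ∈ Hminus p) (he : f =ᵐ[volume] f') :
    f' ∈ Hminus p := by
  obtain ⟨hm, F, hF, hC, hlim⟩ := hf
  refine ⟨hm.ae_eq he, F, hF, hC, ?_⟩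
  filter_upwards [hlim, he] with x hx hex
  rwa [← hex]

lemma mem_kerT_of_ae_eq {g f f' : ℝ → ℂ} (hf : f ∈ kerT p g) (he : f =ᵐ[volume] f') :
    f' ∈ kerT p g :=
  ⟨mem_Hplus_of_ae_eq hf.1 he,
    mem_Hminus_of_ae_eq hf.2 (by filter_upwards [he] with x hx; rw [hx])⟩

lemma kerT_subset_of_ae_eq {g g' : ℝ → ℂ} (he : g =ᵐ[volume] g') : kerT p g ⊆ kerT p g' :=
  fun _ hf => ⟨hf.1, mem_Hminus_of_ae_eq hf.2 (by filter_upwards [he] with x hx; rw [hx])⟩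

lemma mul_mem_kerT_iff {g h f : ℝ → ℂ} (hf : f ∈ Hplus p)
    (hhf : (fun x => h x * f x) ∈ Hplus p) :
    (fun x => h x * f x) ∈ kerT p g ↔ f ∈ kerT p fun x => g x * h x := by
  simp only [kerT, Set.mem_ofPred_eq, mul_assoc, hf, hhf, true_and]

lemma mulSet_subset_kerT_iff {g h : ℝ → ℂ} {K : Set (ℝ → ℂ)} (hK : K ⊆ Hplus p)
    (hhK : mulSet h K ⊆ Hplus p) :
    mulSet h K ⊆ kerT p g ↔ K ⊆ kerT p fun x => g x * h x := by
  simp only [mulSet, Set.image_subset_iff]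
  exact forall₂_congr fun f hf => mul_mem_kerT_iff (hK hf) (hhK ⟨f, hf, rfl⟩)

theorem isMinKernel_mulSet_iff {h k : ℝ → ℂ} (hh : IsLinf h) (hk : IsLinf k)
    (hhk : ∀ᵐ x : ℝ, h x * k x = 1) {g₁ g₂ : ℝ → ℂ} (hg₁ : IsLinf g₁) (hg₂ : IsLinf g₂)
    (heq : kerT p g₁ = mulSet h (kerT p g₂)) (φ : ℝ → ℂ) :
    IsMinKernel p φ (kerT p g₁) ↔
      ∃ ψ : ℝ → ℂ, IsMinKernel p ψ (kerT p g₂) ∧ ∀ᵐ x : ℝ, φ x = h x * ψ x := by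
  have hK₂ : kerT p g₂ ⊆ Hplus p := fun _ hf => hf.1
  have hK₁ : mulSet h (kerT p g₂) ⊆ Hplus p := heq ▸ fun _ hf => hf.1
  -- `g k h = g` a.e., so the symbols `g` and `g k h` have the same kernel.
  have hkh : ∀ g : ℝ → ℂ, (fun x => g x * k x * h x) =ᵐ[volume] g := fun g => by
    filter_upwards [hhk] with x hx
    rw [mul_assoc, mul_comm (k x), hx, mul_one]
  constructor
  · rintro ⟨-, hφK, hφmin⟩
    obtain ⟨ψ, hψK, rfl⟩ : φ ∈ mulSet h (kerT p g₂) := heq ▸ hφK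
    refine ⟨ψ, ⟨⟨g₂, hg₂, rfl⟩, hψK, fun g hg hψg => ?_⟩, ae_of_all _ fun _ => rfl⟩
    have hφg : (fun x => h x * ψ x) ∈ kerT p fun x => g x * k x :=
      (mul_mem_kerT_iff hψK.1 hφK.1).2 (kerT_subset_of_ae_eq (hkh g).symm hψg)
    have hK₁g := (mulSet_subset_kerT_iff hK₂ hK₁).1 (heq ▸ hφmin _ (hg.mul hk) hφg)
    exact hK₁g.trans (kerT_subset_of_ae_eq (hkh g))
  · rintro ⟨ψ, ⟨-, hψK, hψmin⟩, hφψ⟩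
    have hhψ : (fun x => h x * ψ x) ∈ kerT p g₁ := heq ▸ ⟨ψ, hψK, rfl⟩
    refine ⟨⟨g₁, hg₁, rfl⟩, mem_kerT_of_ae_eq hhψ (hφψ.mono fun x hx => hx.symm),
      fun g hg hφg => ?_⟩
    have hψg : ψ ∈ kerT p fun x => g x * h x :=
      (mul_mem_kerT_iff hψK.1 hhψ.1).1 (mem_kerT_of_ae_eq hφg hφψ)
    exact heq ▸ (mulSet_subset_kerT_iff hK₂ hK₁).2 (hψmin _ (hg.mul hh) hψg)

end ToeplitzKernel

theorem stmt15_general (p : ℝ) (θ₁ θ₂ : ℂ → ℂ) (h1 : InnerUHP θ₁) (h2 : InnerUHP θ₂)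
    (h : ℝ → ℂ) (hh : GHinfPlus h) (heq : Kmodel p θ₁ = mulSet h (Kmodel p θ₂))
    (φ : ℝ → ℂ) :
    IsMinKernel p φ (Kmodel p θ₁) ↔
      ∃ ψ : ℝ → ℂ, IsMinKernel p ψ (Kmodel p θ₂) ∧ ∀ᵐ x : ℝ, φ x = h x * ψ x := by
  obtain ⟨hhH, k, hkH, hhk⟩ := hh
  exact isMinKernel_mulSet_iff (isLinf_of_mem_HinfPlus hhH) (isLinf_of_mem_HinfPlus hkH) hhk
    h1.isLinf_conj h2.isLinf_conj heq φ

/-- if `K_{θ₁} = h₊ K_{θ₂}` with `h₊ ∈ GH_∞^+`, then `φ₊` is maximal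
for `K_{θ₁}` iff `φ₊ = h₊ψ₊` with `ψ₊` maximal for `K_{θ₂}`. -/
theorem stmt15 (p : ℝ) (hp : 1 < p) (θ₁ θ₂ : ℂ → ℂ) (h1 : InnerUHP θ₁) (h2 : InnerUHP θ₂)
    (h : ℝ → ℂ) (hh : GHinfPlus h) (heq : Kmodel p θ₁ = mulSet h (Kmodel p θ₂))
    (φ : ℝ → ℂ) :
    IsMinKernel p φ (Kmodel p θ₁) ↔
      ∃ ψ : ℝ → ℂ, IsMinKernel p ψ (Kmodel p θ₂) ∧ ∀ᵐ x : ℝ, φ x = h x * ψ x :=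
  stmt15_general p θ₁ θ₂ h1 h2 h hh heq φ
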